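/- Let X, E be real Banach spaces, L : X → E a Fredholm operator of index 0, i : X → E and j : E → X* injective continuous linear maps such that ⟨u, v⟩ := j(i(u))(v) is a positive definite symmetric bilinear form on X, and such that j ∘ L : X → X* is symmetric. Then E decomposes as the direct sum E = i(ker L) ⊕ Im L. -/

import Mathlib

/-!
If `i u ∈ Im L` for some `u ∈ ker L`, say `i u = L w`, then the symmetry of `j ∘ L` gives
`⟨u, u⟩ = j (L w) u = j (L u) w = 0`, so `u = 0`: the subspaces `i(ker L)` and `Im L` are
disjoint. Hence `i(ker L)` embeds into the cokernel `E ⧸ Im L`, and since `i` is injective and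
`L` has index zero, this embedding is between spaces of the same finite dimension, so it is onto.
-/

open Module LinearMap

theorem Submodule.isCompl_of_disjoint_of_finrank_eq_finrank_quotient {K V : Type*}
    [DivisionRing K] [AddCommGroup V] [Module K V] {p q : Submodule K V}
    [FiniteDimensional K (V ⧸ q)] (hpq : Disjoint p q) (hrank : finrank K p = finrank K (V ⧸ q)) :
    IsCompl p q := by
  have hinj : Function.Injective (q.mkQ ∘ₗ p.subtype) := by
    rwa [← ker_eq_bot, ker_comp, ker_mkQ, ← disjoint_iff_comap_eq_bot]
  have : FiniteDimensional K p := Module.Finite.of_injective _ hinj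
  have hsurj := (injective_iff_surjective_of_finrank_eq_finrank hrank).mp hinj
  refine ⟨hpq, codisjoint_iff.mpr ?_⟩
  rw [sup_comm, ← map_mkQ_eq_top, ← range_subtype p, ← range_comp]
  exact range_eq_top.mpr hsurj

theorem disjoint_map_ker_range_of_symmetric_of_anisotropic {R X E M : Type*} [CommSemiring R]
    [AddCommMonoid X] [Module R X] [AddCommMonoid E] [Module R E] [AddCommMonoid M] [Module R M]
    (L i : X →ₗ[R] E) (B : E →ₗ[R] X →ₗ[R] M) (hL : ∀ u v, B (L u) v = B (L v) u)
    (hi : ∀ u, u ≠ 0 → B (i u) u ≠ 0) : Disjoint ((ker L).map i) (range L) := by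
  rw [Submodule.disjoint_def]
  rintro _ ⟨u, hu : L u = 0, rfl⟩ ⟨w, hw⟩
  have hform : B (i u) u = 0 := by rw [← hw, hL, hu, map_zero, LinearMap.zero_apply]
  obtain rfl : u = 0 := not_imp_not.mp (hi u) hform
  exact map_zero i

theorem image_ker_compl_range_of_fredholm_index_zero_general
    {X E : Type*} [NormedAddCommGroup X] [NormedSpace ℝ X]
    [NormedAddCommGroup E] [NormedSpace ℝ E]
    (L : X →L[ℝ] E)
    -- L is Fredholm of index zero:
    (hcoker : FiniteDimensional ℝ (E ⧸ LinearMap.range (L : X →ₗ[ℝ] E)))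
    (hindex : Module.finrank ℝ (LinearMap.ker (L : X →ₗ[ℝ] E))
      = Module.finrank ℝ (E ⧸ LinearMap.range (L : X →ₗ[ℝ] E)))
    (i : X →L[ℝ] E) (hi : Function.Injective i)
    (j : E →L[ℝ] (X →L[ℝ] ℝ))
    -- ⟨u,v⟩ = j(i u) v is a symmetric positive definite inner product on X:
    (hpos : ∀ u : X, u ≠ 0 → 0 < j (i u) u)
    -- j ∘ L : X → X* is symmetric:
    (hjL : ∀ u v : X, j (L u) v = j (L v) u)
    : IsCompl (Submodule.map (i : X →ₗ[ℝ] E) (LinearMap.ker (L : X →ₗ[ℝ] E))) (LinearMap.range (L : X →ₗ[ℝ] E)) := by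
  have hdisj := disjoint_map_ker_range_of_symmetric_of_anisotropic (L : X →ₗ[ℝ] E) i
    (ContinuousLinearMap.coeLM ℝ ∘ₗ (j : E →ₗ[ℝ] X →L[ℝ] ℝ)) hjL fun u hu ↦ (hpos u hu).ne'
  have hrank : finrank ℝ ((ker (L : X →ₗ[ℝ] E)).map (i : X →ₗ[ℝ] E))
      = finrank ℝ (ker (L : X →ₗ[ℝ] E)) :=
    (Submodule.equivMapOfInjective _ hi _).finrank_eq.symm
  exact Submodule.isCompl_of_disjoint_of_finrank_eq_finrank_quotient hdisj (hrank.trans hindex)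

theorem image_ker_compl_range_of_fredholm_index_zero
    {X E : Type*} [NormedAddCommGroup X] [NormedSpace ℝ X] [CompleteSpace X]
    [NormedAddCommGroup E] [NormedSpace ℝ E] [CompleteSpace E]
    (L : X →L[ℝ] E)
    -- L is Fredholm of index zero:
    (hker : FiniteDimensional ℝ (LinearMap.ker (L : X →ₗ[ℝ] E)))
    (hclosed : IsClosed (LinearMap.range (L : X →ₗ[ℝ] E) : Set E))
    (hcoker : FiniteDimensional ℝ (E ⧸ LinearMap.range (L : X →ₗ[ℝ] E)))
    (hindex : Module.finrank ℝ (LinearMap.ker (L : X →ₗ[ℝ] E))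
      = Module.finrank ℝ (E ⧸ LinearMap.range (L : X →ₗ[ℝ] E)))
    (i : X →L[ℝ] E) (hi : Function.Injective i)
    (j : E →L[ℝ] (X →L[ℝ] ℝ)) (hj : Function.Injective j)
    -- ⟨u,v⟩ = j(i u) v is a symmetric positive definite inner product on X:
    (hsymm : ∀ u v : X, j (i u) v = j (i v) u)
    (hpos : ∀ u : X, u ≠ 0 → 0 < j (i u) u)
    -- j ∘ L : X → X* is symmetric:
    (hjL : ∀ u v : X, j (L u) v = j (L v) u)
    : IsCompl (Submodule.map (i : X →ₗ[ℝ] E) (LinearMap.ker (L : X →ₗ[ℝ] E))) (LinearMap.range (L : X →ₗ[ℝ] E)) :=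
  image_ker_compl_range_of_fredholm_index_zero_general L hcoker hindex i hi j hpos hjL
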